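/- arXiv:1404.1549 — 2 statements merged into one kernel-verified Lean document; each statement's English description precedes it below -/
import Mathlib

section
/- Let G and H be graphs without isolated vertices. Then the Kronecker double coverings K_2 × G and K_2 × H are isomorphic as graphs if and only if the box complexes B(G) and B(H) are isomorphic as posets. -/
/-- A graph: a vertex type with a symmetric edge relation (loops allowed). -/
structure SymmGraph where
  V : Type
  E : V → V → Prop
  symm : ∀ ⦃x y⦄, E x y → E y x

/-- Graph homomorphisms. -/
def SymmGraph.Hom (G H : SymmGraph) : Type :=
  {f : G.V → H.V // ∀ ⦃x y⦄, G.E x y → H.E (f x) (f y)}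

/-- Graph isomorphisms: bijective homomorphisms whose inverse is a homomorphism. -/
structure SymmGraph.Iso (G H : SymmGraph) extends G.V ≃ H.V where
  edge_iff : ∀ x y, G.E x y ↔ H.E (toEquiv x) (toEquiv y)

/-- The complete graph `K₂` on two vertices. -/
def K2 : SymmGraph := ⟨Fin 2, fun x y => x ≠ y, fun _ _ h => h.symm⟩

/-- The tensor (categorical) product of graphs. -/
def SymmGraph.tensor (G H : SymmGraph) : SymmGraph :=
  ⟨G.V × H.V, fun p q => G.E p.1 q.1 ∧ H.E p.2 q.2,
   fun _ _ h => ⟨G.symm h.1, H.symm h.2⟩⟩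

/-- No isolated vertices. -/
def SymmGraph.NoIsolated (G : SymmGraph) : Prop := ∀ x, ∃ y, G.E x y

/-- The box complex `B(G)`: pairs of nonempty subsets `(σ, τ)` with `σ × τ ⊆ E(G)`. -/
def SymmGraph.Box (G : SymmGraph) : Type :=
  {p : Set G.V × Set G.V //
    p.1.Nonempty ∧ p.2.Nonempty ∧ ∀ x ∈ p.1, ∀ y ∈ p.2, G.E x y}

instance (G : SymmGraph) : PartialOrder G.Box where
  le a b := a.1.1 ⊆ b.1.1 ∧ a.1.2 ⊆ b.1.2
  le_refl a := ⟨subset_rfl, subset_rfl⟩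
  le_trans a b c h1 h2 := ⟨h1.1.trans h2.1, h1.2.trans h2.2⟩
  le_antisymm a b h1 h2 :=
    Subtype.ext (Prod.ext (h1.1.antisymm h2.1) (h1.2.antisymm h2.2))

/-- The canonical involution `(σ,τ) ↦ (τ,σ)` of the box complex. -/
def SymmGraph.Box.flip {G : SymmGraph} (p : G.Box) : G.Box :=
  ⟨(p.1.2, p.1.1), p.2.2.1, p.2.1, fun x hx y hy => G.symm (p.2.2.2 y hy x hx)⟩

/-!
The box complex `B(G)` is isomorphic, as a poset, to the poset of bicliques of `K₂ × G` (vertex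
sets carrying a complete bipartite subgraph with both parts nonempty), via
`(σ, τ) ↦ {0} × σ ∪ {1} × τ`. Graph isomorphisms preserve bicliques, which gives one direction.

Conversely, `K₂ × G` is triangle-free and has no isolated vertices, and such a graph is recovered
from its biclique poset. The minimal bicliques are the edges; the bicliques in which any two
distinct edges have a common cover are those inside a star `{v} ∪ N(v)`; and the stars are
singled out among them by an order-theoretic condition. Vertices correspond to stars, except
that both ends of an isolated edge have the same star, and two vertices are adjacent iff their
stars contain a common biclique.
-/

section Order

variable {α β : Type*} [PartialOrder α] [PartialOrder β]

/-- In the biclique poset of a triangle-free graph these are the bicliques contained in a star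
(`SymmGraph.TriangleFree.isFan_iff`). -/
def IsFan (p : α) : Prop :=
  ∀ a b, a ≤ p → b ≤ p → IsMin a → IsMin b → a ≠ b → ∃ c, a ⋖ c ∧ b ⋖ c

/-- In the biclique poset of a triangle-free graph without isolated vertices these are exactly
the stars (`SymmGraph.TriangleFree.exists_eq_starBiclique_of_isStar`). -/
def IsStar (p : α) : Prop :=
  (IsMin p ∨ Maximal IsFan p) ∧ ∃ m, IsFan m ∧ p ≤ m ∧ ∀ q, IsFan q → p ≤ q → q ≤ m

theorem OrderIso.isFan_apply_iff (e : α ≃o β) {p : α} : IsFan (e p) ↔ IsFan p := by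
  simp only [IsFan, e.surjective.forall, e.surjective.exists, e.le_iff_le, e.isMin_apply,
    e.injective.ne_iff, apply_covBy_apply_iff]

theorem OrderIso.isStar_apply_iff (e : α ≃o β) {p : α} : IsStar (e p) ↔ IsStar p := by
  simp only [IsStar, Maximal, e.surjective.forall, e.surjective.exists, e.le_iff_le,
    e.isMin_apply, e.isFan_apply_iff]

/-- The vertices are the stars, plus a second copy, tagged `false`, of each star that is both
minimal and maximal: in a biclique poset such a star belongs to both ends of an isolated edge. -/
def starGraph (α : Type) [PartialOrder α] : SymmGraph where
  V := {p : α × Bool // IsStar p.1 ∧ (p.2 = false → IsMin p.1 ∧ IsMax p.1)}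
  E p q := p ≠ q ∧ ∃ a, a ≤ p.1.1 ∧ a ≤ q.1.1
  symm _ _ h := ⟨h.1.symm, h.2.imp fun _ ha => ⟨ha.2, ha.1⟩⟩

def OrderIso.starGraphCongr {α β : Type} [PartialOrder α] [PartialOrder β] (e : α ≃o β) :
    (starGraph α).Iso (starGraph β) where
  toEquiv := (e.toEquiv.prodCongr (Equiv.refl Bool)).subtypeEquiv fun p => by
    simp [e.isStar_apply_iff, e.isMin_apply, e.isMax_apply]
  edge_iff p q := by
    refine and_congr (Equiv.injective _).ne_iff.symm
      ⟨fun ⟨a, hap, haq⟩ => ⟨e a, e.monotone hap, e.monotone haq⟩,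
        fun ⟨b, hbp, hbq⟩ => ⟨e.symm b, e.symm_apply_le.2 hbp, e.symm_apply_le.2 hbq⟩⟩

end Order

/-- `simp` proves this for `Fin 2 × β` but not for `(K2.tensor G).V`, whose first factor is the
non-reducible `K2.V`. -/
theorem mk_zero_mem_image_union_iff {β : Type*} {σ τ : Set β} {x : β} :
    ((0 : Fin 2), x) ∈ (Prod.mk 0 '' σ ∪ Prod.mk 1 '' τ : Set (Fin 2 × β)) ↔ x ∈ σ := by
  simp

theorem mk_one_mem_image_union_iff {β : Type*} {σ τ : Set β} {x : β} :
    ((1 : Fin 2), x) ∈ (Prod.mk 0 '' σ ∪ Prod.mk 1 '' τ : Set (Fin 2 × β)) ↔ x ∈ τ := by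
  simp

namespace SymmGraph

variable {X Y : SymmGraph}

def Iso.symm (f : X.Iso Y) : Y.Iso X where
  toEquiv := f.toEquiv.symm
  edge_iff x y := by simp only [f.edge_iff, Equiv.apply_symm_apply]

def Iso.trans {Z : SymmGraph} (f : X.Iso Y) (g : Y.Iso Z) : X.Iso Z where
  toEquiv := f.toEquiv.trans g.toEquiv
  edge_iff x y := (f.edge_iff x y).trans (g.edge_iff _ _)

def IsBiclique (X : SymmGraph) (U : Set X.V) : Prop :=
  ∃ S T : Set X.V, S.Nonempty ∧ T.Nonempty ∧ S ∪ T = U ∧ ∀ s ∈ S, ∀ t ∈ T, X.E s t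

abbrev Bicliques (X : SymmGraph) : Type := {U : Set X.V // X.IsBiclique U}

theorem IsBiclique.image {U : Set X.V} (h : X.IsBiclique U) (f : X.Iso Y) :
    Y.IsBiclique (f.toEquiv '' U) := by
  obtain ⟨S, T, hS, hT, rfl, hST⟩ := h
  exact ⟨_, _, hS.image _, hT.image _, (Set.image_union _ _ _).symm, by
    rintro _ ⟨s, hs, rfl⟩ _ ⟨t, ht, rfl⟩
    exact (f.edge_iff s t).1 (hST s hs t ht)⟩

def Iso.bicliquesCongr (f : X.Iso Y) : X.Bicliques ≃o Y.Bicliques where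
  toFun U := ⟨f.toEquiv '' U, U.2.image f⟩
  invFun W := ⟨f.toEquiv.symm '' W, W.2.image f.symm⟩
  left_inv U := Subtype.ext (f.toEquiv.symm_image_image U)
  right_inv W := Subtype.ext (f.toEquiv.image_symm_image W)
  map_rel_iff' := Set.image_subset_image_iff f.toEquiv.injective

theorem IsBiclique.exists_adj {U : Set X.V} (h : X.IsBiclique U) :
    ∃ s ∈ U, ∃ t ∈ U, X.E s t := by
  obtain ⟨S, T, ⟨s, hs⟩, ⟨t, ht⟩, rfl, hST⟩ := h
  exact ⟨s, Or.inl hs, t, Or.inr ht, hST s hs t ht⟩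

def nbhd (X : SymmGraph) (v : X.V) : Set X.V := {w | X.E v w}

def star (X : SymmGraph) (v : X.V) : Set X.V := insert v (X.nbhd v)

theorem isBiclique_insert {v : X.V} {T : Set X.V} (hT : T.Nonempty) (hTv : T ⊆ X.nbhd v) :
    X.IsBiclique (insert v T) :=
  ⟨{v}, T, Set.singleton_nonempty v, hT, Set.singleton_union, by
    rintro s rfl t ht
    exact hTv ht⟩

theorem isBiclique_pair {u v : X.V} (h : X.E u v) : X.IsBiclique {u, v} :=
  isBiclique_insert (Set.singleton_nonempty v) (Set.singleton_subset_iff.2 h)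

theorem isBiclique_star (hN : X.NoIsolated) (v : X.V) : X.IsBiclique (X.star v) :=
  isBiclique_insert (hN v) subset_rfl

theorem pair_subset_star_left {v w : X.V} (h : X.E v w) : {v, w} ⊆ X.star v :=
  Set.insert_subset (Set.mem_insert v _) (Set.singleton_subset_iff.2 (Or.inr h))

theorem pair_subset_star_right {v w : X.V} (h : X.E v w) : {v, w} ⊆ X.star w :=
  Set.insert_subset (Or.inr (X.symm h)) (Set.singleton_subset_iff.2 (Set.mem_insert w _))

def starBiclique (X : SymmGraph) (hN : X.NoIsolated) (v : X.V) : X.Bicliques :=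
  ⟨X.star v, isBiclique_star hN v⟩

theorem Bicliques.covBy_of_eq_insert {U W : X.Bicliques} {x : X.V} (hx : x ∉ (U : Set X.V))
    (hW : (W : Set X.V) = insert x (U : Set X.V)) : U ⋖ W :=
  CovBy.of_image (OrderEmbedding.subtype _) (by simpa [hW] using Set.covBy_insert hx)

theorem exists_eq_pair_of_isMin {U : X.Bicliques} (hU : IsMin U) :
    ∃ s t, X.E s t ∧ (U : Set X.V) = {s, t} := by
  obtain ⟨s, hs, t, ht, hst⟩ := U.2.exists_adj
  have hle : (⟨{s, t}, isBiclique_pair hst⟩ : X.Bicliques) ≤ U :=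
    Set.insert_subset hs (Set.singleton_subset_iff.2 ht)
  exact ⟨s, t, hst, Subtype.ext_iff.1 ((hU hle).antisymm hle)⟩

theorem starBiclique_eq_of_isMin_of_isMax (hN : X.NoIsolated) {v u : X.V}
    (hmin : IsMin (X.starBiclique hN v)) (hmax : IsMax (X.starBiclique hN v))
    (hu : u ∈ X.star v) :
    X.starBiclique hN u = X.starBiclique hN v := by
  rcases hu with rfl | hvu
  · rfl
  let e : X.Bicliques := ⟨{v, u}, isBiclique_pair hvu⟩
  have hle : X.starBiclique hN v ≤ X.starBiclique hN u :=
    le_trans (b := e) (hmin (pair_subset_star_left hvu)) (pair_subset_star_right hvu)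
  exact le_antisymm (hmax hle) hle

noncomputable def Bicliques.rep (U : X.Bicliques) : X.V := U.2.exists_adj.choose

theorem Bicliques.rep_mem (U : X.Bicliques) : U.rep ∈ (U : Set X.V) :=
  U.2.exists_adj.choose_spec.1

open Classical in
/-- Which end of an isolated edge gets the tag `false` is an arbitrary choice. -/
noncomputable def starTag (hN : X.NoIsolated) (v : X.V) : Bool :=
  !decide (IsMin (X.starBiclique hN v) ∧ IsMax (X.starBiclique hN v) ∧
    v = (X.starBiclique hN v).rep)

theorem starTag_eq_false_iff {hN : X.NoIsolated} {v : X.V} :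
    starTag hN v = false ↔ IsMin (X.starBiclique hN v) ∧ IsMax (X.starBiclique hN v) ∧
      v = (X.starBiclique hN v).rep := by
  simp [starTag]

/-- Taking `u = v = w` shows that this also excludes loops. -/
def TriangleFree (X : SymmGraph) : Prop := ∀ u v w, X.E u v → X.E v w → X.E w u → False

section TriangleFree

variable (hX : X.TriangleFree)
include hX

theorem TriangleFree.ne_of_adj {u v : X.V} (h : X.E u v) : u ≠ v := by
  rintro rfl
  exact hX u u u h h h

theorem TriangleFree.eq_or_eq_of_adj_of_mem_star {v x y : X.V} (hxy : X.E x y)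
    (hx : x ∈ X.star v) (hy : y ∈ X.star v) : x = v ∨ y = v := by
  rcases hx with rfl | hx
  · exact Or.inl rfl
  rcases hy with rfl | hy
  · exact Or.inr rfl
  exact (hX v x y hx hxy (X.symm hy)).elim

theorem TriangleFree.nbhd_eq_of_star_subset_star {u v : X.V} (h : X.star v ⊆ X.star u)
    (huv : u ≠ v) : X.nbhd v = {u} := by
  have hvu : X.E u v := (h (Set.mem_insert v _)).resolve_left huv.symm
  refine Set.eq_singleton_iff_unique_mem.2 ⟨X.symm hvu, fun x hx => ?_⟩
  exact ((h (Or.inr hx)).resolve_right fun hux => hX u v x hvu hx (X.symm hux))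

theorem TriangleFree.adj_or_adj_of_mem {U : Set X.V} (hU : X.IsBiclique U) {x v w : X.V}
    (hx : x ∈ U) (hv : v ∈ U) (hw : w ∈ U) (hvw : X.E v w) : X.E x v ∨ X.E x w := by
  obtain ⟨S, T, ⟨s, hs⟩, ⟨t, ht⟩, rfl, hST⟩ := hU
  rcases hx with hx | hx <;> rcases hv with hv | hv <;> rcases hw with hw | hw
  · exact (hX v w t hvw (hST w hw t ht) (X.symm (hST v hv t ht))).elim
  · exact Or.inr (hST x hx w hw)
  · exact Or.inl (hST x hx v hv)
  · exact (hX v w s hvw (X.symm (hST s hs w hw)) (hST s hs v hv)).elim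
  · exact (hX v w t hvw (hST w hw t ht) (X.symm (hST v hv t ht))).elim
  · exact Or.inl (X.symm (hST v hv x hx))
  · exact Or.inr (X.symm (hST w hw x hx))
  · exact (hX v w s hvw (X.symm (hST s hs w hw)) (hST s hs v hv)).elim

theorem TriangleFree.isMin_of_eq_pair {U : X.Bicliques} {u v : X.V} (huv : X.E u v)
    (hU : (U : Set X.V) = {u, v}) : IsMin U := by
  intro W hWU
  obtain ⟨s, hs, t, ht, hst⟩ := W.2.exists_adj
  have hs' : s ∈ ({u, v} : Set X.V) := hU ▸ hWU hs
  have ht' : t ∈ ({u, v} : Set X.V) := hU ▸ hWU ht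
  show (U : Set X.V) ⊆ W
  rw [hU]
  rcases hs' with rfl | rfl <;> rcases ht' with rfl | rfl
  · exact (hX.ne_of_adj hst rfl).elim
  · exact Set.insert_subset hs (Set.singleton_subset_iff.2 ht)
  · exact Set.insert_subset ht (Set.singleton_subset_iff.2 hs)
  · exact (hX.ne_of_adj hst rfl).elim

theorem TriangleFree.not_isFan_of_four_cycle {U : X.Bicliques} {s₁ s₂ t₁ t₂ : X.V} (hs : s₁ ≠ s₂)
    (ht : t₁ ≠ t₂) (hs₁ : s₁ ∈ (U : Set X.V)) (hs₂ : s₂ ∈ (U : Set X.V))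
    (ht₁ : t₁ ∈ (U : Set X.V)) (ht₂ : t₂ ∈ (U : Set X.V)) (h₁₁ : X.E s₁ t₁)
    (h₁₂ : X.E s₁ t₂) (h₂₁ : X.E s₂ t₁) (h₂₂ : X.E s₂ t₂) : ¬IsFan U := by
  intro hU
  have h₁₂' := hX.ne_of_adj h₁₂
  have h₂₁' := hX.ne_of_adj h₂₁
  have h₂₂' := hX.ne_of_adj h₂₂
  let a : X.Bicliques := ⟨{s₁, t₁}, isBiclique_pair h₁₁⟩
  let b : X.Bicliques := ⟨{s₂, t₂}, isBiclique_pair h₂₂⟩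
  let z : X.Bicliques := ⟨insert s₁ {t₁, t₂}, isBiclique_insert (Set.insert_nonempty _ _)
    (Set.insert_subset h₁₁ (Set.singleton_subset_iff.2 h₁₂))⟩
  have hab : a ≠ b := fun h => by
    have : s₂ ∈ (a : Set X.V) := h ▸ Set.mem_insert _ _
    simp_all [a]
  obtain ⟨c, hac, hbc⟩ := hU a b (Set.insert_subset hs₁ (Set.singleton_subset_iff.2 ht₁))
    (Set.insert_subset hs₂ (Set.singleton_subset_iff.2 ht₂)) (hX.isMin_of_eq_pair h₁₁ rfl)
    (hX.isMin_of_eq_pair h₂₂ rfl) hab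
  have hac' : {s₁, t₁} ⊆ (c : Set X.V) := hac.le
  have hbc' : {s₂, t₂} ⊆ (c : Set X.V) := hbc.le
  simp only [Set.insert_subset_iff, Set.singleton_subset_iff] at hac' hbc'
  have haz : a < z := (Set.ssubset_iff_of_subset (by simp [a, z, Set.insert_subset_iff])).2
    ⟨t₂, by simp [z], by simp [a, h₁₂'.symm, ht.symm]⟩
  have hzc : z < c := (Set.ssubset_iff_of_subset (by simp [z, Set.insert_subset_iff, *])).2
    ⟨s₂, hbc'.1, by simp [z, hs.symm, h₂₁', h₂₂']⟩
  exact hac.2 haz hzc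

theorem TriangleFree.exists_subset_star_of_isFan {U : X.Bicliques} (hU : IsFan U) :
    ∃ v, (U : Set X.V) ⊆ X.star v := by
  obtain ⟨S, T, hS, hT, hSTU, hST⟩ := U.2
  rcases hS.exists_eq_singleton_or_nontrivial with ⟨s, rfl⟩ | ⟨s₁, hs₁, s₂, hs₂, hs⟩
  · exact ⟨s, hSTU ▸ Set.union_subset_union_right _ (fun t ht => hST s rfl t ht)⟩
  rcases hT.exists_eq_singleton_or_nontrivial with ⟨t, rfl⟩ | ⟨t₁, ht₁, t₂, ht₂, ht⟩
  · refine ⟨t, hSTU ▸ Set.union_subset (fun s hs => Or.inr (X.symm (hST s hs t rfl))) ?_⟩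
    exact Set.singleton_subset_iff.2 (Set.mem_insert t _)
  exact (hX.not_isFan_of_four_cycle hs ht (hSTU ▸ Or.inl hs₁) (hSTU ▸ Or.inl hs₂)
    (hSTU ▸ Or.inr ht₁) (hSTU ▸ Or.inr ht₂) (hST _ hs₁ _ ht₁) (hST _ hs₁ _ ht₂)
    (hST _ hs₂ _ ht₁) (hST _ hs₂ _ ht₂) hU).elim

theorem TriangleFree.exists_eq_pair_of_isMin_of_subset_star {a : X.Bicliques} {v : X.V}
    (ha : IsMin a) (hav : (a : Set X.V) ⊆ X.star v) : ∃ w, X.E v w ∧ (a : Set X.V) = {v, w} := by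
  obtain ⟨s, t, hst, hst'⟩ := exists_eq_pair_of_isMin ha
  rw [hst', Set.insert_subset_iff, Set.singleton_subset_iff] at hav
  rcases hX.eq_or_eq_of_adj_of_mem_star hst hav.1 hav.2 with rfl | rfl
  · exact ⟨t, hst, hst'⟩
  · exact ⟨s, X.symm hst, hst'.trans (Set.pair_comm _ _)⟩

theorem TriangleFree.isFan_of_subset_star {U : X.Bicliques} {v : X.V}
    (hUv : (U : Set X.V) ⊆ X.star v) : IsFan U := by
  intro a b haU hbU ha hb hab
  obtain ⟨x, hvx, hax⟩ :=
    hX.exists_eq_pair_of_isMin_of_subset_star ha ((Subtype.coe_le_coe.2 haU).trans hUv)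
  obtain ⟨y, hvy, hby⟩ :=
    hX.exists_eq_pair_of_isMin_of_subset_star hb ((Subtype.coe_le_coe.2 hbU).trans hUv)
  have hxy : x ≠ y := by
    rintro rfl
    exact hab (Subtype.ext (hax.trans hby.symm))
  let c : X.Bicliques := ⟨insert v {x, y}, isBiclique_insert (Set.insert_nonempty _ _)
    (Set.insert_subset hvx (Set.singleton_subset_iff.2 hvy))⟩
  refine ⟨c, Bicliques.covBy_of_eq_insert (x := y) ?_ ?_,
    Bicliques.covBy_of_eq_insert (x := x) ?_ ?_⟩
  · simp [hax, hxy.symm, (hX.ne_of_adj hvy).symm]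
  · rw [hax]; ext; simp only [c, Set.mem_insert_iff, Set.mem_singleton_iff]; tauto
  · simp [hby, hxy, (hX.ne_of_adj hvx).symm]
  · rw [hby]; ext; simp only [c, Set.mem_insert_iff, Set.mem_singleton_iff]; tauto

theorem TriangleFree.isFan_iff {U : X.Bicliques} : IsFan U ↔ ∃ v, (U : Set X.V) ⊆ X.star v :=
  ⟨hX.exists_subset_star_of_isFan, fun ⟨_, hUv⟩ => hX.isFan_of_subset_star hUv⟩

variable (hN : X.NoIsolated)

theorem TriangleFree.isStar_starBiclique (v : X.V) : IsStar (X.starBiclique hN v) := by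
  have isFan_star : ∀ u, IsFan (X.starBiclique hN u) := fun _ => hX.isFan_of_subset_star subset_rfl
  have fan_above : ∀ W : X.Bicliques, IsFan W → X.starBiclique hN v ≤ W →
      ∃ u, (W : Set X.V) ⊆ X.star u ∧ (u = v ∨ X.nbhd v = {u}) := by
    intro W hW hvW
    obtain ⟨u, hu⟩ := hX.isFan_iff.1 hW
    exact ⟨u, hu, (eq_or_ne u v).imp_right
      (hX.nbhd_eq_of_star_subset_star ((Subtype.coe_le_coe.2 hvW).trans hu))⟩
  by_cases hv : ∃ w, X.nbhd v = {w}
  · obtain ⟨w, hw⟩ := hv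
    have hvw : X.E v w := (Set.eq_singleton_iff_unique_mem.1 hw).1
    have hstar : X.star v = {v, w} := by rw [star, hw]
    have hvw_le : X.starBiclique hN v ≤ X.starBiclique hN w :=
      hstar.trans_subset (pair_subset_star_right hvw)
    refine ⟨Or.inl (hX.isMin_of_eq_pair hvw hstar), _, isFan_star w, hvw_le, fun W hW hvW => ?_⟩
    obtain ⟨u, hu, rfl | hvu⟩ := fan_above W hW hvW
    · exact le_trans (α := X.Bicliques) hu hvw_le
    · obtain rfl : u = w := Set.singleton_injective (hvu.symm.trans hw)
      exact hu
  · push Not at hv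
    have le_star : ∀ W : X.Bicliques, IsFan W → X.starBiclique hN v ≤ W →
        W ≤ X.starBiclique hN v := by
      intro W hW hvW
      obtain ⟨u, hu, rfl | hvu⟩ := fan_above W hW hvW
      · exact hu
      · exact (hv u hvu).elim
    exact ⟨Or.inr ⟨isFan_star v, le_star⟩, _, isFan_star v, le_rfl, le_star⟩

theorem TriangleFree.exists_eq_starBiclique_of_isStar {U : X.Bicliques} (hU : IsStar U) :
    ∃ v, U = X.starBiclique hN v := by
  obtain ⟨hmin | hmax, m, hm, hUm, hm_greatest⟩ := hU
  · obtain ⟨s, t, hst, hU⟩ := exists_eq_pair_of_isMin hmin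
    have hs : X.star s ⊆ m := hm_greatest (X.starBiclique hN s)
      (hX.isFan_of_subset_star subset_rfl) (hU.trans_subset (pair_subset_star_left hst))
    have ht : X.star t ⊆ m := hm_greatest (X.starBiclique hN t)
      (hX.isFan_of_subset_star subset_rfl) (hU.trans_subset (pair_subset_star_right hst))
    obtain ⟨u, hu⟩ := hX.isFan_iff.1 hm
    rcases eq_or_ne u s with rfl | hus
    · refine ⟨t, Subtype.ext ?_⟩
      show (U : Set X.V) = X.star t
      rw [hU, star, hX.nbhd_eq_of_star_subset_star (ht.trans hu) (hX.ne_of_adj hst),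
        Set.pair_comm]
    · have hsu := hX.nbhd_eq_of_star_subset_star (hs.trans hu) hus
      obtain rfl : t = u := (Set.eq_singleton_iff_unique_mem.1 hsu).2 t hst
      exact ⟨s, Subtype.ext (show (U : Set X.V) = X.star s by rw [hU, star, hsu])⟩
  · obtain ⟨v, hv⟩ := hX.isFan_iff.1 hmax.prop
    exact ⟨v, le_antisymm (α := X.Bicliques) hv (hmax.2 (hX.isFan_of_subset_star subset_rfl) hv)⟩

theorem TriangleFree.adj_iff_exists_le_starBiclique {v w : X.V} :
    X.E v w ↔ v ≠ w ∧ ∃ a, a ≤ X.starBiclique hN v ∧ a ≤ X.starBiclique hN w := by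
  constructor
  · intro hvw
    exact ⟨hX.ne_of_adj hvw, ⟨{v, w}, isBiclique_pair hvw⟩, pair_subset_star_left hvw,
      pair_subset_star_right hvw⟩
  · rintro ⟨hvw, a, hav, haw⟩
    obtain ⟨s, hs, t, ht, hst⟩ := a.2.exists_adj
    rcases hX.eq_or_eq_of_adj_of_mem_star hst (hav hs) (hav ht) with rfl | rfl <;>
      rcases hX.eq_or_eq_of_adj_of_mem_star hst (haw hs) (haw ht) with rfl | rfl
    · exact (hvw rfl).elim
    · exact hst
    · exact X.symm hst
    · exact (hvw rfl).elim

theorem TriangleFree.star_eq_pair_of_starBiclique_eq {v w : X.V} (hvw : v ≠ w)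
    (h : X.starBiclique hN v = X.starBiclique hN w) : X.star v = {v, w} := by
  rw [star, hX.nbhd_eq_of_star_subset_star (congrArg Subtype.val h).le hvw.symm]

theorem TriangleFree.isMin_and_isMax_of_starBiclique_eq {v w : X.V} (hvw : v ≠ w)
    (h : X.starBiclique hN v = X.starBiclique hN w) :
    IsMin (X.starBiclique hN v) ∧ IsMax (X.starBiclique hN v) := by
  have hNv := hX.nbhd_eq_of_star_subset_star (congrArg Subtype.val h).le hvw.symm
  have hNw := hX.nbhd_eq_of_star_subset_star (congrArg Subtype.val h).ge hvw
  have hadj : X.E v w := (Set.eq_singleton_iff_unique_mem.1 hNv).1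
  refine ⟨hX.isMin_of_eq_pair hadj (show X.star v = {v, w} by rw [star, hNv]),
    fun W hvW x hx => ?_⟩
  rcases hX.adj_or_adj_of_mem W.2 hx (hvW (Set.mem_insert v _)) (hvW (Or.inr hadj)) hadj
    with hxv | hxw
  · exact Or.inr (X.symm hxv)
  · exact Or.inl ((Set.eq_singleton_iff_unique_mem.1 hNw).2 x (X.symm hxw))

noncomputable def TriangleFree.toStarGraph (v : X.V) :
    (starGraph X.Bicliques).V :=
  ⟨(X.starBiclique hN v, starTag hN v), hX.isStar_starBiclique hN v,
    fun h => (starTag_eq_false_iff.1 h).imp_right And.left⟩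

theorem TriangleFree.toStarGraph_injective : Function.Injective (hX.toStarGraph hN) := by
  intro v w h
  have hstar : X.starBiclique hN v = X.starBiclique hN w := congrArg (·.1.1) h
  have htag : starTag hN v = starTag hN w := congrArg (·.1.2) h
  by_contra hvw
  obtain ⟨hmin, hmax⟩ := hX.isMin_and_isMax_of_starBiclique_eq hN hvw hstar
  have hrep : (X.starBiclique hN v).rep ∈ X.star v := (X.starBiclique hN v).rep_mem
  rw [hX.star_eq_pair_of_starBiclique_eq hN hvw hstar] at hrep
  rcases hrep with hrep | hrep
  · have hv : starTag hN v = false := starTag_eq_false_iff.2 ⟨hmin, hmax, hrep.symm⟩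
    obtain ⟨-, -, hw⟩ := starTag_eq_false_iff.1 (htag ▸ hv)
    exact hvw (hw.trans (hstar ▸ hrep)).symm
  · rw [hstar] at hmin hmax hrep
    have hw : starTag hN w = false := starTag_eq_false_iff.2 ⟨hmin, hmax, hrep.symm⟩
    obtain ⟨-, -, hv⟩ := starTag_eq_false_iff.1 (htag ▸ hw)
    exact hvw (hv.trans (hstar ▸ hrep))

theorem TriangleFree.toStarGraph_surjective : Function.Surjective (hX.toStarGraph hN) := by
  rintro ⟨⟨U, b⟩, hU, hb⟩
  obtain ⟨v, rfl⟩ := hX.exists_eq_starBiclique_of_isStar hN hU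
  suffices ∃ w, X.starBiclique hN w = X.starBiclique hN v ∧ starTag hN w = b by
    obtain ⟨w, hw, hwb⟩ := this
    exact ⟨w, Subtype.ext (Prod.ext hw hwb)⟩
  cases b
  · obtain ⟨hmin, hmax⟩ := hb rfl
    have hr := starBiclique_eq_of_isMin_of_isMax hN hmin hmax (X.starBiclique hN v).rep_mem
    refine ⟨_, hr, starTag_eq_false_iff.2 ?_⟩
    rw [hr]
    exact ⟨hmin, hmax, rfl⟩
  · by_cases hv : starTag hN v = true
    · exact ⟨v, rfl, hv⟩
    obtain ⟨hmin, hmax, hvrep⟩ := starTag_eq_false_iff.1 (Bool.eq_false_iff.2 hv)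
    obtain ⟨w, hw⟩ := hN v
    have hwv := starBiclique_eq_of_isMin_of_isMax hN hmin hmax (Or.inr hw)
    refine ⟨w, hwv, ?_⟩
    by_contra h
    obtain ⟨-, -, hwrep⟩ := starTag_eq_false_iff.1 (Bool.eq_false_iff.2 h)
    exact hX.ne_of_adj hw (hvrep.trans (hwv ▸ hwrep).symm)

noncomputable def TriangleFree.isoStarGraph : X.Iso (starGraph X.Bicliques) where
  toEquiv := Equiv.ofBijective _ ⟨hX.toStarGraph_injective hN, hX.toStarGraph_surjective hN⟩
  edge_iff _ _ := (hX.adj_iff_exists_le_starBiclique hN).trans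
    (and_congr_left' (hX.toStarGraph_injective hN).ne_iff.symm)

end TriangleFree

section Kronecker

variable (G : SymmGraph)

theorem triangleFree_kronecker : (K2.tensor G).TriangleFree := by
  have no_three_levels : ∀ i j k : Fin 2, i ≠ j → j ≠ k → k ≠ i → False := by decide
  exact fun _ _ _ huv hvw hwu => no_three_levels _ _ _ huv.1 hvw.1 hwu.1

theorem noIsolated_kronecker (hG : G.NoIsolated) : (K2.tensor G).NoIsolated := by
  rintro ⟨i, x⟩
  change Fin 2 at i
  obtain ⟨y, hxy⟩ := hG x
  exact ⟨(i + 1, y), show i ≠ i + 1 by omega, hxy⟩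

variable {G}

theorem IsBiclique.kronecker_adj {U : Set (Fin 2 × G.V)} (hU : (K2.tensor G).IsBiclique U)
    {u w : Fin 2 × G.V} (hu : u ∈ U) (hw : w ∈ U) (huw : u.1 ≠ w.1) : (K2.tensor G).E u w := by
  obtain ⟨S, T, ⟨s, hs⟩, ⟨t, ht⟩, rfl, hST⟩ := hU
  have level_ne : ∀ {a b : Fin 2 × G.V}, a ∈ S → b ∈ T → a.1 ≠ b.1 :=
    fun ha hb => (hST _ ha _ hb).1
  rcases hu with hu | hu <;> rcases hw with hw | hw
  · have := level_ne hu ht; have := level_ne hw ht; omega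
  · exact hST u hu w hw
  · exact (K2.tensor G).symm (hST w hw u hu)
  · have := level_ne hs hu; have := level_ne hs hw; omega

theorem IsBiclique.exists_mem_kronecker {U : Set (Fin 2 × G.V)}
    (hU : (K2.tensor G).IsBiclique U) (i : Fin 2) : ∃ x, (i, x) ∈ U := by
  have two_levels : ∀ i j k : Fin 2, j ≠ k → i = j ∨ i = k := by decide
  obtain ⟨s, hs, t, ht, hst⟩ := hU.exists_adj
  obtain rfl | rfl := two_levels i s.1 t.1 hst.1
  exacts [⟨s.2, hs⟩, ⟨t.2, ht⟩]

variable (G)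

def boxOrderIsoBicliques : G.Box ≃o (K2.tensor G).Bicliques :=
  Equiv.toOrderIso
    { toFun p := ⟨Prod.mk (0 : Fin 2) '' p.1.1 ∪ Prod.mk (1 : Fin 2) '' p.1.2, _, _,
        p.2.1.image _, p.2.2.1.image _, rfl, by
          rintro _ ⟨x, hx, rfl⟩ _ ⟨y, hy, rfl⟩
          exact ⟨(by decide : (0 : Fin 2) ≠ 1), p.2.2.2 x hx y hy⟩⟩
      invFun U := ⟨({x | ((0 : Fin 2), x) ∈ U.1},
          {y | ((1 : Fin 2), y) ∈ U.1}),
        U.2.exists_mem_kronecker 0, U.2.exists_mem_kronecker 1,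
        fun _ hx _ hy => (U.2.kronecker_adj hx hy (by decide : (0 : Fin 2) ≠ 1)).2⟩
      left_inv _ := Subtype.ext (Prod.ext (Set.ext fun _ => mk_zero_mem_image_union_iff)
        (Set.ext fun _ => mk_one_mem_image_union_iff))
      right_inv _ := by
        ext ⟨i, x⟩
        change Fin 2 at i
        fin_cases i
        exacts [mk_zero_mem_image_union_iff, mk_one_mem_image_union_iff] }
    (fun p q hpq => Set.union_subset_union (Set.image_mono hpq.1) (Set.image_mono hpq.2))
    (fun U W hUW => ⟨fun _ hx => hUW hx, fun _ hy => hUW hy⟩)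

end Kronecker

end SymmGraph

/-- for graphs without isolated vertices, the Kronecker double coverings
`K₂ × G` and `K₂ × H` are isomorphic as graphs iff the box complexes `B(G)` and
`B(H)` are isomorphic as posets. -/
theorem box_poset_iso_iff_kronecker_iso (G H : SymmGraph)
    (hG : G.NoIsolated) (hH : H.NoIsolated) :
    Nonempty ((K2.tensor G).Iso (K2.tensor H)) ↔ Nonempty (G.Box ≃o H.Box) := by
  constructor
  · rintro ⟨f⟩
    exact ⟨(SymmGraph.boxOrderIsoBicliques G).trans
      (f.bicliquesCongr.trans (SymmGraph.boxOrderIsoBicliques H).symm)⟩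
  · rintro ⟨φ⟩
    let e := (SymmGraph.boxOrderIsoBicliques G).symm.trans
      (φ.trans (SymmGraph.boxOrderIsoBicliques H))
    have hXG := SymmGraph.triangleFree_kronecker G
    have hXH := SymmGraph.triangleFree_kronecker H
    exact ⟨(hXG.isoStarGraph (SymmGraph.noIsolated_kronecker G hG)).trans
      (e.starGraphCongr.trans (hXH.isoStarGraph (SymmGraph.noIsolated_kronecker H hH)).symm)⟩
end

section
/- Let m and n be integers greater than 2. Then there exist finite connected graphs G and H with χ(G) = m and χ(H) = n such that the box complexes B(G) and B(H) are isomorphic as posets and the neighborhood complexes N(G) and N(H) are isomorphic as abstract simplicial complexes. -/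
/-- The complete graph `Kₙ`. -/
def completeGraphOn (n : ℕ) : SymmGraph := ⟨Fin n, fun x y => x ≠ y, fun _ _ h => h.symm⟩

/-- A graph is connected if any two vertices are joined by a walk. -/
def SymmGraph.Connected (G : SymmGraph) : Prop := ∀ x y : G.V, Relation.ReflTransGen G.E x y

/-- `χ(G) = n`: `n` is the least number such that there is a homomorphism `G → Kₙ`. -/
def SymmGraph.chromEq (G : SymmGraph) (n : ℕ) : Prop :=
  IsLeast {k : ℕ | Nonempty (G.Hom (completeGraphOn k))} n

/-- An abstract simplicial complex, given by its vertex type and its simplices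
(nonempty finite vertex sets). -/
structure SComplex where
  V : Type
  S : Finset V → Prop

/-- Isomorphism of abstract simplicial complexes: a bijection of vertex sets under
which a finite set is a simplex iff its image is a simplex. -/
def SComplex.Iso (A B : SComplex) : Prop :=
  ∃ e : A.V ≃ B.V, ∀ s : Finset A.V, A.S s ↔ B.S (s.map e.toEmbedding)

/-- The neighborhood complex `N(G)`: vertices are the non-isolated vertices of `G`,
simplices the nonempty finite sets contained in the neighborhood of some vertex. -/
def SymmGraph.NC (G : SymmGraph) : SComplex where
  V := {x : G.V // ∃ y, G.E x y}
  S s := s.Nonempty ∧ ∃ v : G.V, ∀ x ∈ s, G.E v x.val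

namespace SymmGraph

lemma edge_comm (G : SymmGraph) {x y : G.V} : G.E x y ↔ G.E y x :=
  ⟨fun h => G.symm h, fun h => G.symm h⟩

def join (G H : SymmGraph) : SymmGraph where
  V := G.V ⊕ H.V
  E
    | .inl x, .inl y => G.E x y
    | .inl _, .inr _ => True
    | .inr _, .inl _ => True
    | .inr x, .inr y => H.E x y
  symm
    | .inl _, .inl _, h => G.symm h
    | .inl _, .inr _, _ => trivial
    | .inr _, .inl _, _ => trivial
    | .inr _, .inr _, h => H.symm h

/-- A side-preserving isomorphism of the bipartite double covers `G × K₂ ≅ H × K₂`. -/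
structure CoverIso (G H : SymmGraph) where
  left : G.V ≃ H.V
  right : G.V ≃ H.V
  edge_iff : ∀ x y, G.E x y ↔ H.E (left x) (right y)

namespace CoverIso

variable {G H : SymmGraph}

def symm (e : G.CoverIso H) : H.CoverIso G where
  left := e.left.symm
  right := e.right.symm
  edge_iff x y := by simp [e.edge_iff]

def tensorLeft (C : SymmGraph) (e : G.CoverIso H) : (C.tensor G).CoverIso (C.tensor H) where
  left := (Equiv.refl C.V).prodCongr e.left
  right := (Equiv.refl C.V).prodCongr e.right
  edge_iff x y := and_congr_right' (e.edge_iff x.2 y.2)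

def boxIso (e : G.CoverIso H) : G.Box ≃o H.Box where
  toEquiv := Equiv.subtypeEquiv ((Equiv.Set.congr e.left).prodCongr (Equiv.Set.congr e.right))
    fun p => by
      simp only [Equiv.prodCongr_apply, Prod.map, Equiv.Set.congr_apply, Set.image_nonempty,
        Set.forall_mem_image, e.edge_iff]
  map_rel_iff' {p q} :=
    and_congr (Set.image_subset_image_iff e.left.injective)
      (Set.image_subset_image_iff e.right.injective)

lemma ncIso (e : G.CoverIso H) : G.NC.Iso H.NC := by
  have nonisolated_iff (x : G.V) : (∃ y, G.E x y) ↔ ∃ y, H.E (e.right x) y := by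
    calc (∃ y, G.E x y) ↔ ∃ y, G.E y x := exists_congr fun _ => G.edge_comm
      _ ↔ ∃ y, H.E (e.left y) (e.right x) := exists_congr fun y => e.edge_iff y x
      _ ↔ ∃ y, H.E y (e.right x) :=
        e.left.exists_congr_right (q := fun y => H.E y (e.right x))
      _ ↔ ∃ y, H.E (e.right x) y := exists_congr fun _ => H.edge_comm
  refine ⟨Equiv.subtypeEquiv e.right nonisolated_iff,
    fun s => and_congr Finset.map_nonempty.symm ?_⟩
  refine (exists_congr fun v => ?_).trans e.left.exists_congr_right
  constructor
  · intro h y hy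
    obtain ⟨x, hx, rfl⟩ := Finset.mem_map.1 hy
    exact (e.edge_iff v x.1).1 (h x hx)
  · exact fun h x hx => (e.edge_iff v x.1).2 (h _ (Finset.mem_map_of_mem _ hx))

def joinRight (e : G.CoverIso H) (C : SymmGraph) : (G.join C).CoverIso (H.join C) where
  left := e.left.sumCongr (Equiv.refl C.V)
  right := e.right.sumCongr (Equiv.refl C.V)
  edge_iff
    | .inl x, .inl y => e.edge_iff x y
    | .inl _, .inr _ => Iff.rfl
    | .inr _, .inl _ => Iff.rfl
    | .inr _, .inr _ => Iff.rfl

end CoverIso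

def IsColoring (G : SymmGraph) {ι : Type} (c : G.V → ι) : Prop :=
  ∀ ⦃x y⦄, G.E x y → c x ≠ c y

def IsClique (G : SymmGraph) {ι : Type} (g : ι → G.V) : Prop :=
  Pairwise fun i j => G.E (g i) (g j)

lemma chromEq_card {G : SymmGraph} {ι : Type} [Fintype ι] {c : G.V → ι} {g : ι → G.V}
    (hc : G.IsColoring c) (hg : G.IsClique g) : G.chromEq (Fintype.card ι) := by
  refine ⟨⟨⟨fun x => Fintype.equivFin ι (c x), fun _ _ h => ?_⟩⟩, ?_⟩
  · exact (Fintype.equivFin ι).injective.ne (hc h)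
  · rintro j ⟨f, hf⟩
    have hinj : Function.Injective fun i => (f (g i) : Fin j) :=
      fun i i' h => by_contra fun hne => hf (hg hne) h
    simpa using Fintype.card_le_of_injective (β := Fin j) _ hinj

section Join

variable {G H : SymmGraph} {ι κ : Type}

lemma IsColoring.join {c : G.V → ι} {d : H.V → κ} (hc : G.IsColoring c)
    (hd : H.IsColoring d) : (G.join H).IsColoring (Sum.map c d) := by
  rintro (x | x) (y | y) h
  · exact Sum.inl_injective.ne (hc h)
  · exact Sum.inl_ne_inr
  · exact Sum.inr_ne_inl
  · exact Sum.inr_injective.ne (hd h)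

lemma IsClique.join {g : ι → G.V} {h : κ → H.V} (hg : G.IsClique g) (hh : H.IsClique h) :
    (G.join H).IsClique (Sum.map g h) := by
  rintro (i | i) (j | j) hij
  · exact hg (Sum.inl_injective.ne_iff.1 hij)
  · trivial
  · trivial
  · exact hh (Sum.inr_injective.ne_iff.1 hij)

lemma connected_join (x : G.V) (y : H.V) : (G.join H).Connected := by
  have : Std.Symm (G.join H).E := ⟨fun _ _ h => (G.join H).symm h⟩
  have to_inr : ∀ p, Relation.ReflTransGen (G.join H).E p (.inr y)
    | .inl _ => .single trivial
    | .inr p => .head (show (G.join H).E (.inr p) (.inl x) from trivial) (.single trivial)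
  exact fun p q => (to_inr p).trans (Std.Symm.symm _ _ (to_inr q))

end Join

lemma IsColoring.tensorLeft {C : SymmGraph} {ι : Type} {c : C.V → ι} (hc : C.IsColoring c)
    (A : SymmGraph) : (C.tensor A).IsColoring (c ∘ Prod.fst) :=
  fun _ _ h => hc h.1

lemma IsColoring.tensorRight {A : SymmGraph} {ι : Type} {c : A.V → ι} (hc : A.IsColoring c)
    (C : SymmGraph) : (C.tensor A).IsColoring (c ∘ Prod.snd) :=
  fun _ _ h => hc h.2

lemma IsClique.tensor {C A : SymmGraph} {ι : Type} {g : ι → C.V} {h : ι → A.V}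
    (hg : C.IsClique g) (hh : A.IsClique h) : (C.tensor A).IsClique fun i => (g i, h i) :=
  fun _ _ hij => ⟨hg hij, hh hij⟩

end SymmGraph

open SymmGraph

def twoLoops : SymmGraph := ⟨Fin 2, Eq, fun _ _ h => h.symm⟩

def twoLoopsCoverIsoK2 : twoLoops.CoverIso K2 where
  left := Equiv.refl (Fin 2)
  right := (Equiv.swap 0 1 : Fin 2 ≃ Fin 2)
  edge_iff := by
    change ∀ x y : Fin 2, x = y ↔ x ≠ Equiv.swap 0 1 y
    decide

lemma isColoring_id_completeGraphOn (n : ℕ) : (completeGraphOn n).IsColoring id :=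
  fun _ _ h => h

lemma isClique_id_completeGraphOn (n : ℕ) : (completeGraphOn n).IsClique id :=
  fun _ _ h => h

lemma chromEq_tensor_twoLoops_join (k s : ℕ) :
    (((completeGraphOn k).tensor twoLoops).join (completeGraphOn s)).chromEq (k + s) := by
  simpa using chromEq_card (ι := Fin k ⊕ Fin s)
    (((isColoring_id_completeGraphOn k).tensorLeft twoLoops).join
      (isColoring_id_completeGraphOn s))
    (((isClique_id_completeGraphOn k).tensor (h := fun _ => (0 : Fin 2)) fun _ _ _ => rfl).join
      (isClique_id_completeGraphOn s))

lemma chromEq_tensor_K2_join {k : ℕ} (hk : 2 ≤ k) (s : ℕ) :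
    (((completeGraphOn k).tensor K2).join (completeGraphOn s)).chromEq (2 + s) := by
  have hK2 : K2.IsColoring id := fun _ _ h => h
  simpa using chromEq_card (ι := Fin 2 ⊕ Fin s)
    ((hK2.tensorRight (completeGraphOn k)).join (isColoring_id_completeGraphOn s))
    ((IsClique.tensor (g := Fin.castLE hk) (h := id)
      (fun _ _ hij => (Fin.castLE_injective hk).ne hij) fun _ _ hij => hij).join
      (isClique_id_completeGraphOn s))

lemma exists_coverIso_of_le {m n : ℕ} (hn : 2 < n) (hnm : n ≤ m) :
    ∃ G H : SymmGraph, Finite G.V ∧ Finite H.V ∧ G.Connected ∧ H.Connected ∧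
      G.chromEq m ∧ H.chromEq n ∧ Nonempty (G.CoverIso H) := by
  obtain ⟨s, rfl⟩ : ∃ s, n = 2 + s := ⟨n - 2, by omega⟩
  obtain ⟨k, rfl⟩ : ∃ k, m = k + s := ⟨m - s, by omega⟩
  have hk : 2 ≤ k := by omega
  let apex : Fin s := ⟨0, by omega⟩
  let base : Fin k × Fin 2 := (⟨0, by omega⟩, 0)
  exact ⟨_, _, inferInstanceAs (Finite ((Fin k × Fin 2) ⊕ Fin s)),
    inferInstanceAs (Finite ((Fin k × Fin 2) ⊕ Fin s)),
    connected_join base apex, connected_join base apex,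
    chromEq_tensor_twoLoops_join k s, chromEq_tensor_K2_join hk s,
    ⟨(twoLoopsCoverIsoK2.tensorLeft _).joinRight _⟩⟩

/-- for any integers `m, n > 2`, there are finite connected graphs `G`, `H`
with `χ(G) = m`, `χ(H) = n`, whose box complexes are isomorphic as posets and whose
neighborhood complexes are isomorphic. -/
theorem exists_graphs_different_chromatic_same_box_poset
    (m n : ℕ) (hm : 2 < m) (hn : 2 < n) :
    ∃ G H : SymmGraph, Finite G.V ∧ Finite H.V ∧ G.Connected ∧ H.Connected ∧
      G.chromEq m ∧ H.chromEq n ∧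
      Nonempty (G.Box ≃o H.Box) ∧ G.NC.Iso H.NC := by
  rcases le_total n m with h | h
  · obtain ⟨G, H, hG, hH, cG, cH, χG, χH, ⟨e⟩⟩ := exists_coverIso_of_le hn h
    exact ⟨G, H, hG, hH, cG, cH, χG, χH, ⟨e.boxIso⟩, e.ncIso⟩
  · obtain ⟨H, G, hH, hG, cH, cG, χH, χG, ⟨e⟩⟩ := exists_coverIso_of_le hm h
    exact ⟨G, H, hG, hH, cG, cH, χG, χH, ⟨e.symm.boxIso⟩, e.symm.ncIso⟩
end
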